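/- arXiv:2204.08847 — 3 statements merged into one kernel-verified Lean document; each statement's English description precedes it below -/
import Mathlib

section
/- Let H be a d-dimensional RKHS on a set X with kernel k, and let x_1,…,x_d ∈ X be points such that k(x_1,·),…,k(x_d,·) are linearly independent, with kernel matrix K = (k(x_i,x_j)) having minimal eigenvalue λ_d > 0. Then for every h ∈ H, (λ_d/d)^{1/2}·‖h‖ ≤ ‖h‖_∞. -/
/-!
Since `d = finrank H`, the independent features `Φ (x i)` form a basis, so `h = ∑ cᵢ Φ (x i)`.
The Gram matrix turns the eigenvalue bound into `λ ‖c‖² ≤ ‖h‖²`, while the values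
`wᵢ = ⟪Φ (x i), h⟫` satisfy `‖h‖² = ⟪c, w⟫ ≤ ‖c‖ ‖w‖` by Cauchy–Schwarz. Together these give
`λ ‖h‖² ≤ ‖w‖² ≤ d · maxᵢ |wᵢ|²`, and `maxᵢ |wᵢ|` is bounded by the sup norm of `h`.
-/

open scoped RealInnerProductSpace ENNReal

open Finset

section Gram

variable {H ι : Type*} [NormedAddCommGroup H] [InnerProductSpace ℝ H] [Fintype ι]

theorem norm_sum_smul_sq_eq_sum_sum_inner (v : ι → H) (c : ι → ℝ) :
    ‖∑ i, c i • v i‖ ^ 2 = ∑ i, ∑ j, c i * ⟪v i, v j⟫ * c j := by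
  rw [← real_inner_self_eq_norm_sq, sum_inner]
  refine sum_congr rfl fun i _ => ?_
  rw [real_inner_smul_left, inner_sum, mul_sum]
  refine sum_congr rfl fun j _ => ?_
  rw [real_inner_smul_right]
  ring

theorem mul_norm_sq_le_sum_inner_sq {lam : ℝ} (v : ι → H) (c : ι → ℝ) {h : H}
    (hc : ∑ i, c i • v i = h) (hlam : lam * ∑ i, c i ^ 2 ≤ ‖h‖ ^ 2) :
    lam * ‖h‖ ^ 2 ≤ ∑ i, ⟪v i, h⟫ ^ 2 := by
  have hnorm : ‖h‖ ^ 2 = ∑ i, c i * ⟪v i, h⟫ := by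
    rw [← real_inner_self_eq_norm_sq]
    nth_rewrite 1 [← hc]
    simp only [sum_inner, real_inner_smul_left]
  have hsum_nonneg : 0 ≤ ∑ i, ⟪v i, h⟫ ^ 2 := sum_nonneg fun i _ => sq_nonneg _
  rcases le_or_gt lam 0 with hlam_nonpos | hlam_pos
  · exact (mul_nonpos_of_nonpos_of_nonneg hlam_nonpos (sq_nonneg _)).trans hsum_nonneg
  rcases (sq_nonneg ‖h‖).eq_or_lt with hzero | hpos
  · rw [← hzero, mul_zero]
    exact hsum_nonneg
  refine le_of_mul_le_mul_left ?_ hpos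
  calc ‖h‖ ^ 2 * (lam * ‖h‖ ^ 2) = lam * (∑ i, c i * ⟪v i, h⟫) ^ 2 := by rw [← hnorm]; ring
    _ ≤ lam * ((∑ i, c i ^ 2) * ∑ i, ⟪v i, h⟫ ^ 2) :=
      mul_le_mul_of_nonneg_left (sum_mul_sq_le_sq_mul_sq _ _ _) hlam_pos.le
    _ = (lam * ∑ i, c i ^ 2) * ∑ i, ⟪v i, h⟫ ^ 2 := by ring
    _ ≤ ‖h‖ ^ 2 * ∑ i, ⟪v i, h⟫ ^ 2 := mul_le_mul_of_nonneg_right hlam hsum_nonneg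

end Gram

theorem sum_sq_le_card_mul_sq {ι : Type*} [Fintype ι] (w : ι → ℝ) {M : ℝ}
    (hw : ∀ i, |w i| ≤ M) : ∑ i, w i ^ 2 ≤ Fintype.card ι * M ^ 2 := by
  calc ∑ i, w i ^ 2 ≤ ∑ _i : ι, M ^ 2 :=
        sum_le_sum fun i _ => sq_le_sq' (abs_le.mp (hw i)).1 (abs_le.mp (hw i)).2
    _ = Fintype.card ι * M ^ 2 := by simp

theorem sqrt_div_mul_le_of_mul_sq_le {a b M n : ℝ} (hn : 0 < n) (hb : 0 ≤ b) (hM : 0 ≤ M)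
    (h : a * b ^ 2 ≤ n * M ^ 2) : √(a / n) * b ≤ M := by
  rw [← Real.sqrt_sq hb, ← Real.sqrt_mul' _ (sq_nonneg b), ← Real.sqrt_sq hM]
  refine Real.sqrt_le_sqrt ?_
  rw [div_mul_eq_mul_div, div_le_iff₀ hn]
  linarith

theorem rkhs_sup_norm_lower_bound_general {X H : Type*}
    [NormedAddCommGroup H] [InnerProductSpace ℝ H]
    (d : ℕ) (hd : 0 < d)
    (hdim : Module.finrank ℝ H = d)
    (Φ : X → H)
    (x : Fin d → X) (hli : LinearIndependent ℝ (fun i => Φ (x i)))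
    (K : Matrix (Fin d) (Fin d) ℝ) (hK : ∀ i j, K i j = ⟪Φ (x i), Φ (x j)⟫)
    (lam : ℝ)
    (hlam_lb : ∀ v : Fin d → ℝ, lam * (∑ i, v i ^ 2) ≤ ∑ i, ∑ j, v i * K i j * v j)
    (h : H) :
    ENNReal.ofReal (Real.sqrt (lam / d) * ‖h‖) ≤ ⨆ x', (‖⟪Φ x', h⟫‖₊ : ℝ≥0∞) := by
  have : Nonempty (Fin d) := ⟨⟨0, hd⟩⟩
  obtain ⟨c, hc⟩ : ∃ c : Fin d → ℝ, ∑ i, c i • Φ (x i) = h := by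
    rw [← Submodule.mem_span_range_iff_exists_fun,
      hli.span_eq_top_of_card_eq_finrank (by simp [hdim])]
    trivial
  have hgram : lam * ∑ i, c i ^ 2 ≤ ‖h‖ ^ 2 := by
    rw [← hc, norm_sum_smul_sq_eq_sum_sum_inner]
    simpa only [hK] using hlam_lb c
  obtain ⟨i₀, hi₀⟩ := Finite.exists_max fun i => |⟪Φ (x i), h⟫|
  have hmax : lam * ‖h‖ ^ 2 ≤ d * |⟪Φ (x i₀), h⟫| ^ 2 := by
    simpa only [Fintype.card_fin] using
      (mul_norm_sq_le_sum_inner_sq _ c hc hgram).trans (sum_sq_le_card_mul_sq _ hi₀)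
  calc ENNReal.ofReal (√(lam / d) * ‖h‖) ≤ ENNReal.ofReal |⟪Φ (x i₀), h⟫| :=
        ENNReal.ofReal_le_ofReal <| sqrt_div_mul_le_of_mul_sq_le (by positivity)
          (norm_nonneg h) (abs_nonneg _) hmax
    _ = ‖⟪Φ (x i₀), h⟫‖₊ := (Real.enorm_eq_ofReal_abs _).symm
    _ ≤ ⨆ x', (‖⟪Φ x', h⟫‖₊ : ℝ≥0∞) := le_iSup (fun x' => (‖⟪Φ x', h⟫‖₊ : ℝ≥0∞)) (x i₀)

/-- In a `d`-dimensional RKHS, if the features at points `x_1, …, x_d` are linearly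
    independent and `lam` is the minimal eigenvalue of the Gram matrix, then
    `√(lam/d)·‖h‖ ≤ ‖h‖_∞` for every `h`. -/
theorem rkhs_sup_norm_lower_bound {X H : Type*}
    [NormedAddCommGroup H] [InnerProductSpace ℝ H]
    (d : ℕ) (hd : 0 < d) [FiniteDimensional ℝ H]
    (hdim : Module.finrank ℝ H = d)
    (Φ : X → H) (hspan : Submodule.span ℝ (Set.range Φ) = ⊤)
    (x : Fin d → X) (hli : LinearIndependent ℝ (fun i => Φ (x i)))
    (K : Matrix (Fin d) (Fin d) ℝ) (hK : ∀ i j, K i j = ⟪Φ (x i), Φ (x j)⟫)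
    (lam : ℝ)
    (hlam_lb : ∀ v : Fin d → ℝ, lam * (∑ i, v i ^ 2) ≤ ∑ i, ∑ j, v i * K i j * v j)
    (hlam_eig : ∃ v : Fin d → ℝ, v ≠ 0 ∧ K.mulVec v = lam • v)
    (h : H) :
    ENNReal.ofReal (Real.sqrt (lam / d) * ‖h‖) ≤ ⨆ x', (‖⟪Φ x', h⟫‖₊ : ℝ≥0∞) :=
  rkhs_sup_norm_lower_bound_general d hd hdim Φ x hli K hK lam hlam_lb h
end

section
/- Let X be compact, k a continuous kernel on X with infinite-dimensional RKHS H and C the closed convex hull of {k(x,·) : x ∈ X}. For every ε > 0 and every orthonormal sequence (e_n) in H, the set {n : sup_x e_n(x) − inf_x e_n(x) > ε} is finite. -/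
/-!
By Bessel's inequality the coordinates `⟪e n, v⟫` tend to `0` for every `v`, and they are
`1`-Lipschitz in `v`; an equicontinuous family converging pointwise on a compact space converges
uniformly, so `sup_x |⟪Φ x, e n⟫| ≤ ε / 2` for all but finitely many `n`, and then the oscillation
of `x ↦ ⟪Φ x, e n⟫` is at most `ε`.
-/

open scoped RealInnerProductSpace
open Filter Topology

namespace Orthonormal

variable {𝕜 H ι : Type*} [RCLike 𝕜] [NormedAddCommGroup H] [InnerProductSpace 𝕜 H]
  {e : ι → H}

theorem tendsto_inner_cofinite_zero (he : Orthonormal 𝕜 e) (v : H) :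
    Tendsto (fun i => inner 𝕜 (e i) v) cofinite (𝓝 0) := by
  have h := (he.inner_products_summable v).tendsto_cofinite_zero.sqrt
  simp only [Real.sqrt_zero, Real.sqrt_sq (norm_nonneg _)] at h
  exact tendsto_zero_iff_norm_tendsto_zero.2 h

theorem uniformEquicontinuous_inner (he : Orthonormal 𝕜 e) :
    UniformEquicontinuous fun i (v : H) => inner 𝕜 (e i) v := by
  refine LipschitzWith.uniformEquicontinuous _ 1 fun i =>
    LipschitzWith.of_dist_le_mul fun v w => ?_
  rw [dist_eq_norm, dist_eq_norm, ← inner_sub_right]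
  simpa [he.1 i] using norm_inner_le_norm (𝕜 := 𝕜) (e i) (v - w)

theorem tendstoUniformly_inner_comp {X : Type*} [TopologicalSpace X] [CompactSpace X]
    (he : Orthonormal 𝕜 e) {Φ : X → H} (hΦ : Continuous Φ) :
    TendstoUniformly (fun i x => inner 𝕜 (e i) (Φ x)) 0 cofinite := by
  have heq : Equicontinuous fun i x => inner 𝕜 (e i) (Φ x) :=
    equicontinuous_iff_continuous.2 <|
      (equicontinuous_iff_continuous.1 he.uniformEquicontinuous_inner.equicontinuous).comp hΦ
  exact UniformFun.tendsto_iff_tendstoUniformly.1 <| (heq.tendsto_uniformFun_iff_pi _ 0).2 <|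
    tendsto_pi_nhds.2 fun x => he.tendsto_inner_cofinite_zero (Φ x)

end Orthonormal

theorem Real.sSup_range_sub_sInf_range_le {α : Type*} {f : α → ℝ} {r : ℝ}
    (hf : ∀ x, |f x| ≤ r) (hr : 0 ≤ r) :
    sSup (Set.range f) - sInf (Set.range f) ≤ 2 * r := by
  have hsup : sSup (Set.range f) ≤ r :=
    Real.sSup_le (Set.forall_mem_range.2 fun x => (abs_le.1 (hf x)).2) hr
  have hinf : -r ≤ sInf (Set.range f) :=
    Real.le_sInf (Set.forall_mem_range.2 fun x => (abs_le.1 (hf x)).1) (by linarith)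
  linarith

theorem finitely_many_large_diameters_general {X H : Type*}
    [TopologicalSpace X] [CompactSpace X]
    [NormedAddCommGroup H] [InnerProductSpace ℝ H]
    (Φ : X → H) (hΦ : Continuous Φ)
    (e : ℕ → H) (he : Orthonormal ℝ e)
    (ε : ℝ) (hε : 0 < ε) :
    {n : ℕ | ε < sSup (Set.range fun x => ⟪Φ x, e n⟫)
        - sInf (Set.range fun x => ⟪Φ x, e n⟫)}.Finite := by
  have hsmall : ∀ᶠ n in cofinite, ∀ x, |⟪Φ x, e n⟫| ≤ ε / 2 := by
    filter_upwards [Metric.tendstoUniformly_iff.1 (he.tendstoUniformly_inner_comp hΦ) (ε / 2)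
      (half_pos hε)] with n hn x
    simpa [real_inner_comm, dist_comm] using (hn x).le
  refine (eventually_cofinite.1 hsmall).subset fun n hlarge hbounded => ?_
  linarith [hlarge.out, Real.sSup_range_sub_sInf_range_le hbounded (half_pos hε).le]

/-- For a continuous kernel on a compact space with infinite-dimensional RKHS, for
    every `ε > 0` and every orthonormal sequence `(e_n)`, only finitely many `e_n`
    have directional diameter `sup_x e_n(x) − inf_x e_n(x)` exceeding `ε`. -/
theorem finitely_many_large_diameters {X H : Type*}
    [TopologicalSpace X] [CompactSpace X]
    [NormedAddCommGroup H] [InnerProductSpace ℝ H] [CompleteSpace H]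
    (hinf : ¬ FiniteDimensional ℝ H)
    (Φ : X → H) (hΦ : Continuous Φ)
    (hspan : Dense (Submodule.span ℝ (Set.range Φ) : Set H))
    (e : ℕ → H) (he : Orthonormal ℝ e)
    (ε : ℝ) (hε : 0 < ε) :
    {n : ℕ | ε < sSup (Set.range fun x => ⟪Φ x, e n⟫)
        - sInf (Set.range fun x => ⟪Φ x, e n⟫)}.Finite :=
  finitely_many_large_diameters_general Φ hΦ e he ε hε
end

section
/- Let X = [0,1]^d, H an RKHS on X such that every h ∈ H satisfies |h(x) − h(x')| ≤ L‖h‖·‖x − x'‖, and P a probability measure on X with density bounded below by c > 0. Let m = ∫ k(x,·) dP. If h ∈ H with ‖h‖ ≤ 1 and there exists x with ⟨h, k(x,·) − m⟩ ≥ γ > 0 and γ/L ≤ 1, then max_{y ∈ X} ⟨−h, k(y,·) − m⟩ ≥ c·γ^{d+1}·β_d / ((d+1)·(2L)^d), where β_d is the Lebesgue volume of the unit ball in ℝ^d. -/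
/-!
Put `f y = ⟪h, Φ y - m⟫`. It has `μ`-mean zero and is `L`-Lipschitz on the cube, so at a minimiser
`y` of `f` we have `f y ≤ 0`, and the tent `(γ - L‖z - x‖)₊` lies below `f - f y` on the cube. Hence
`-f y ≥ ∫ tent dμ ≥ c ∫_cube tent`.

Folding each coordinate of `[-1, 1]^d` onto `[0, 1]` around `x` (first `t ↦ |t|`, then
`unitFold`) pushes Lebesgue measure to `2^d` times Lebesgue measure on the cube and does not
increase the distance to `x`. As `γ / L ≤ 1`, the tent centred at `0` is supported in `[-1, 1]^d`,
so `∫_cube tent ≥ 2^{-d} ∫_{ℝ^d} (γ - L‖u‖)₊ = 2^{-d} β_d γ^{d+1} / ((d+1) L^d)` by polar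
coordinates.
-/

open MeasureTheory Set
open scoped ENNReal NNReal RealInnerProductSpace

theorem LipschitzOnWith.exists_lintegral_ofReal_sub_mul_dist_le {X : Type*}
    [PseudoMetricSpace X] [MeasurableSpace X] {μ : Measure X} [IsProbabilityMeasure μ]
    {S : Set X} (hS : IsCompact S) (hμS : ∀ᵐ y ∂μ, y ∈ S) {f : X → ℝ} {K : ℝ≥0}
    (hf : LipschitzOnWith K f S) (hfi : Integrable f μ) (hf0 : ∫ y, f y ∂μ = 0) {x₀ : X}
    (hx₀ : x₀ ∈ S) {γ : ℝ} (hγ : γ ≤ f x₀) :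
    ∃ y ∈ S, ∫⁻ z, ENNReal.ofReal (γ - K * dist z x₀) ∂μ ≤ ENNReal.ofReal (-f y) := by
  obtain ⟨y, hyS, hymin⟩ := hS.exists_isMinOn ⟨x₀, hx₀⟩ hf.continuousOn
  refine ⟨y, hyS, ?_⟩
  have hfy_nonpos : f y ≤ 0 := by
    simpa [hf0] using integral_mono_ae (integrable_const (f y)) hfi (hμS.mono fun z hz => hymin hz)
  have htent : ∀ᵐ z ∂μ, γ - K * dist z x₀ ≤ f z - f y := hμS.mono fun z hz => by
    have h := (le_abs_self _).trans (hf.dist_le_mul x₀ hx₀ z hz)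
    rw [dist_comm] at h
    linarith
  have hint : Integrable (fun z => f z - f y) μ := hfi.sub (integrable_const _)
  calc ∫⁻ z, ENNReal.ofReal (γ - K * dist z x₀) ∂μ
      ≤ ∫⁻ z, ENNReal.ofReal (f z - f y) ∂μ :=
        lintegral_mono_ae (htent.mono fun z hz => ENNReal.ofReal_le_ofReal hz)
    _ = ENNReal.ofReal (-f y) := by
        rw [← ofReal_integral_eq_lintegral_ofReal hint
          (hμS.mono fun z hz => sub_nonneg.2 (hymin hz)),
          integral_sub hfi (integrable_const _), hf0, integral_const]
        simp

section Kernel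

variable {E H : Type*} [NormedAddCommGroup H] [InnerProductSpace ℝ H]

theorem lipschitzOnWith_inner_sub [PseudoMetricSpace E] {Φ : E → H} {S : Set E} {L : ℝ≥0}
    (hΦ : ∀ g : H, ∀ x ∈ S, ∀ x' ∈ S, |⟪Φ x, g⟫ - ⟪Φ x', g⟫| ≤ L * ‖g‖ * dist x x')
    (h m : H) : LipschitzOnWith (L * ‖h‖₊) (fun y => ⟪h, Φ y - m⟫) S := by
  refine LipschitzOnWith.of_dist_le_mul fun x hx x' hx' => ?_
  rw [Real.dist_eq, inner_sub_right, inner_sub_right, sub_sub_sub_cancel_right,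
    real_inner_comm (Φ x), real_inner_comm (Φ x')]
  simpa [mul_comm, mul_left_comm, mul_assoc] using hΦ h x hx x' hx'

theorem integral_inner_sub_integral [CompleteSpace H] [MeasurableSpace E] {μ : Measure E}
    [IsProbabilityMeasure μ] {Φ : E → H} (hΦ : Integrable Φ μ) (h : H) :
    ∫ y, ⟪h, Φ y - ∫ x, Φ x ∂μ⟫ ∂μ = 0 := by
  simp_rw [inner_sub_right]
  rw [integral_sub (hΦ.const_inner h) (integrable_const _), integral_inner hΦ h, integral_const]
  simp

end Kernel

noncomputable def unitFold (a t : ℝ) : ℝ := if a + t ≤ 1 then a + t else 1 - t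

theorem measurable_unitFold (a : ℝ) : Measurable (unitFold a) :=
  Measurable.ite (measurableSet_le (measurable_const_add a) measurable_const)
    (measurable_const_add a) (measurable_const_sub 1)

theorem abs_unitFold_sub_le {a t : ℝ} (ha : a ≤ 1) (ht : 0 ≤ t) : |unitFold a t - a| ≤ t := by
  unfold unitFold
  split_ifs with h
  · simp [abs_of_nonneg ht]
  · rw [abs_le]
    constructor <;> linarith

theorem measurePreserving_unitFold {a : ℝ} (ha : a ∈ Icc (0 : ℝ) 1) :
    MeasurePreserving (unitFold a) (volume.restrict (Icc 0 1)) (volume.restrict (Icc 0 1)) := by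
  obtain ⟨ha0, ha1⟩ := ha
  have htranslate : MeasurePreserving (unitFold a) (volume.restrict (Icc 0 (1 - a)))
      (volume.restrict (Icc a 1)) := by
    have h := (measurePreserving_add_left volume a).restrict_preimage
      (s := Icc a 1) measurableSet_Icc
    rw [preimage_const_add_Icc, sub_self] at h
    refine h.congr (measurable_unitFold a) ?_
    filter_upwards [ae_restrict_mem measurableSet_Icc] with t ht
    simp [unitFold, show a + t ≤ 1 by linarith [ht.2]]
  have hreflect : MeasurePreserving (unitFold a) (volume.restrict (Ioc (1 - a) 1))
      (volume.restrict (Ico 0 a)) := by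
    have h := (Measure.measurePreserving_sub_left volume (1 : ℝ)).restrict_preimage
      (s := Ico 0 a) measurableSet_Ico
    rw [preimage_const_sub_Ico, sub_zero] at h
    refine h.congr (measurable_unitFold a) ?_
    filter_upwards [ae_restrict_mem measurableSet_Ioc] with t ht
    simp [unitFold, show ¬ a + t ≤ 1 by linarith [ht.1]]
  have hsource : Icc (0 : ℝ) 1 = Icc 0 (1 - a) ∪ Ioc (1 - a) 1 :=
    (Icc_union_Ioc_eq_Icc (by linarith) (by linarith)).symm
  have htarget : Icc (0 : ℝ) 1 = Icc a 1 ∪ Ico 0 a := by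
    rw [union_comm, Ico_union_Icc_eq_Icc ha0 ha1]
  have h := htranslate.add_measure hreflect
  rwa [← Measure.restrict_union (disjoint_left.2 fun t h1 h2 => h2.1.not_ge h1.2)
      measurableSet_Ioc,
    ← Measure.restrict_union (disjoint_left.2 fun t h1 h2 => h2.2.not_ge h1.1) measurableSet_Ico,
    ← hsource, ← htarget] at h

theorem measurePreserving_abs_Icc :
    MeasurePreserving (fun t : ℝ => |t|) (volume.restrict (Icc (-1) 1))
      (volume.restrict (Icc 0 1) + volume.restrict (Icc 0 1)) := by
  have hneg : MeasurePreserving (fun t : ℝ => |t|) (volume.restrict (Icc (-1) 0))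
      (volume.restrict (Icc 0 1)) := by
    have h := (Measure.measurePreserving_neg (volume : Measure ℝ)).restrict_preimage
      (s := Icc 0 1) measurableSet_Icc
    rw [show (Neg.neg : ℝ → ℝ) ⁻¹' Icc 0 1 = Icc (-1) 0 by simp] at h
    refine h.congr measurable_abs ?_
    filter_upwards [ae_restrict_mem measurableSet_Icc] with t ht
    exact (abs_of_nonpos ht.2).symm
  have hpos : MeasurePreserving (fun t : ℝ => |t|) (volume.restrict (Ioc 0 1))
      (volume.restrict (Icc 0 1)) := by
    rw [← Measure.restrict_congr_set Ioc_ae_eq_Icc]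
    refine (MeasurePreserving.id _).congr measurable_abs ?_
    filter_upwards [ae_restrict_mem measurableSet_Ioc] with t ht
    exact (abs_of_pos ht.1).symm
  have h := hneg.add_measure hpos
  rwa [← Measure.restrict_union (disjoint_left.2 fun t h1 h2 => h2.1.not_ge h1.2)
    measurableSet_Ioc, Icc_union_Ioc_eq_Icc (by norm_num) (by norm_num)] at h

theorem MeasureTheory.Measure.pi_add_self {ι α : Type*} [Fintype ι] [MeasurableSpace α]
    (ν : Measure α) [SigmaFinite ν] :
    Measure.pi (fun _ : ι => ν + ν) = (2 : ℝ≥0∞) ^ Fintype.card ι • Measure.pi (fun _ => ν) := by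
  refine Measure.pi_eq fun s _ => ?_
  simp [Measure.pi_pi, ← two_mul, Finset.prod_mul_distrib]

section Cube

variable {d : ℕ}

theorem EuclideanSpace.norm_le_norm_of_forall_abs_le {x y : EuclideanSpace ℝ (Fin d)}
    (h : ∀ i, |x i| ≤ |y i|) : ‖x‖ ≤ ‖y‖ := by
  simp only [EuclideanSpace.norm_eq, Real.norm_eq_abs]
  exact Real.sqrt_le_sqrt (Finset.sum_le_sum fun i _ => pow_le_pow_left₀ (abs_nonneg _) (h i) 2)

theorem EuclideanSpace.setOf_forall_mem_eq_preimage (s : Set ℝ) :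
    {y : EuclideanSpace ℝ (Fin d) | ∀ i, y i ∈ s} = WithLp.ofLp ⁻¹' univ.pi fun _ => s := by
  ext
  simp

theorem EuclideanSpace.isCompact_setOf_forall_mem {s : Set ℝ} (hs : IsCompact s) :
    IsCompact {y : EuclideanSpace ℝ (Fin d) | ∀ i, y i ∈ s} := by
  rw [EuclideanSpace.setOf_forall_mem_eq_preimage]
  exact (PiLp.homeomorph 2 _).isCompact_preimage.2 (isCompact_univ_pi fun _ => hs)

theorem EuclideanSpace.measurableSet_setOf_forall_mem {s : Set ℝ} (hs : MeasurableSet s) :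
    MeasurableSet {y : EuclideanSpace ℝ (Fin d) | ∀ i, y i ∈ s} := by
  rw [EuclideanSpace.setOf_forall_mem_eq_preimage]
  exact (MeasurableSet.univ_pi fun _ => hs).preimage (WithLp.measurable_ofLp 2 _)

theorem EuclideanSpace.measurePreserving_unitFold_abs {a : EuclideanSpace ℝ (Fin d)}
    (ha : ∀ i, a i ∈ Icc (0 : ℝ) 1) :
    MeasurePreserving
      (fun u : EuclideanSpace ℝ (Fin d) => WithLp.toLp 2 fun i => unitFold (a i) |u i|)
      (volume.restrict {u | ∀ i, u i ∈ Icc (-1) 1})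
      ((2 : ℝ≥0∞) ^ d • volume.restrict {y | ∀ i, y i ∈ Icc 0 1}) := by
  have hpi : MeasurePreserving (fun (v : Fin d → ℝ) i => unitFold (a i) |v i|)
      (volume.restrict (univ.pi fun _ => Icc (-1) 1))
      ((2 : ℝ≥0∞) ^ d • volume.restrict (univ.pi fun _ => Icc 0 1)) := by
    have h := measurePreserving_pi _ _ fun i =>
      ((measurePreserving_unitFold (ha i)).add_measure (measurePreserving_unitFold (ha i))).comp
        measurePreserving_abs_Icc
    rwa [Measure.pi_add_self, Fintype.card_fin, ← Measure.restrict_pi_pi,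
      ← Measure.restrict_pi_pi] at h
  have hofLp := (PiLp.volume_preserving_ofLp (Fin d)).restrict_preimage
    (MeasurableSet.univ_pi fun _ => measurableSet_Icc (a := (-1 : ℝ)) (b := 1))
  rw [← EuclideanSpace.setOf_forall_mem_eq_preimage] at hofLp
  have htoLp := ((PiLp.volume_preserving_toLp (Fin d)).restrict_preimage
    (EuclideanSpace.measurableSet_setOf_forall_mem (d := d)
      (measurableSet_Icc (a := (0 : ℝ)) (b := 1)))).smul_measure
    ((2 : ℝ≥0∞) ^ d)
  rw [show WithLp.toLp 2 ⁻¹' {y : EuclideanSpace ℝ (Fin d) | ∀ i, y i ∈ Icc 0 1} =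
    univ.pi fun _ => Icc 0 1 by ext; simp only [mem_preimage, mem_ofPred_eq, mem_univ_pi]] at htoLp
  exact htoLp.comp (hpi.comp hofLp)

theorem lintegral_comp_norm_le_two_pow_mul_setLIntegral_cube {φ : ℝ → ℝ≥0∞} (hφ : Antitone φ)
    (hφ_one : ∀ t, 1 < t → φ t = 0) {a : EuclideanSpace ℝ (Fin d)}
    (ha : ∀ i, a i ∈ Icc (0 : ℝ) 1) :
    ∫⁻ u : EuclideanSpace ℝ (Fin d), φ ‖u‖ ≤
      2 ^ d * ∫⁻ y in {y | ∀ i, y i ∈ Icc (0 : ℝ) 1}, φ (dist y a) := by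
  set T := fun u : EuclideanSpace ℝ (Fin d) => WithLp.toLp 2 fun i => unitFold (a i) |u i|
  have hsupp : (fun u : EuclideanSpace ℝ (Fin d) => φ ‖u‖).support ⊆
      {u | ∀ i, u i ∈ Icc (-1) 1} := fun u hu i => by
    have hu1 : ‖u‖ ≤ 1 := not_lt.1 fun h => hu (hφ_one _ h)
    exact abs_le.1 ((Real.norm_eq_abs _).symm.trans_le ((PiLp.norm_apply_le u i).trans hu1))
  have hT : ∀ u, dist (T u) a ≤ ‖u‖ := fun u => by
    rw [dist_eq_norm]
    refine EuclideanSpace.norm_le_norm_of_forall_abs_le fun i => ?_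
    simpa using abs_unitFold_sub_le (ha i).2 (abs_nonneg (u i))
  have hmeas : Measurable fun y : EuclideanSpace ℝ (Fin d) => φ (dist y a) :=
    hφ.measurable.comp (measurable_id.dist measurable_const)
  calc ∫⁻ u, φ ‖u‖ = ∫⁻ u in {u : EuclideanSpace ℝ (Fin d) | ∀ i, u i ∈ Icc (-1) 1}, φ ‖u‖ :=
        (setLIntegral_eq_of_support_subset hsupp).symm
    _ ≤ ∫⁻ u in {u | ∀ i, u i ∈ Icc (-1) 1}, φ (dist (T u) a) :=
        lintegral_mono fun u => hφ (hT u)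
    _ = 2 ^ d * ∫⁻ y in {y | ∀ i, y i ∈ Icc (0 : ℝ) 1}, φ (dist y a) := by
        rw [(EuclideanSpace.measurePreserving_unitFold_abs ha).lintegral_comp hmeas,
          lintegral_smul_measure, smul_eq_mul]

end Cube

theorem integral_Ioi_pow_smul_max_sub (e : ℕ) {γ L : ℝ} (hγ : 0 < γ) (hL : 0 < L) :
    ∫ t in Ioi (0 : ℝ), t ^ e • max (γ - L * t) 0 =
      γ ^ (e + 2) / (L ^ (e + 1) * ((e + 1) * (e + 2))) := by
  have hr : 0 ≤ γ / L := (div_pos hγ hL).le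
  have hmax : ∀ t, max (γ - L * t) 0 = 0 ↔ γ / L ≤ t := fun t => by
    rw [max_eq_right_iff, sub_nonpos, div_le_iff₀' hL]
  rw [setIntegral_eq_of_subset_of_forall_sdiff_eq_zero measurableSet_Ioi Ioc_subset_Ioi_self
    fun t ht => by simp [(hmax t).2 (le_of_lt (not_le.1 fun h => ht.2 ⟨ht.1, h⟩))],
    ← intervalIntegral.integral_of_le hr]
  have hcongr : EqOn (fun t => t ^ e • max (γ - L * t) 0)
      (fun t => γ * t ^ e - L * t ^ (e + 1)) (uIcc 0 (γ / L)) := fun t ht => by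
    rw [uIcc_of_le hr] at ht
    simp only [smul_eq_mul]
    rw [max_eq_left (by rw [sub_nonneg]; exact (le_div_iff₀' hL).1 ht.2)]
    ring
  rw [intervalIntegral.integral_congr hcongr, intervalIntegral.integral_sub
    ((intervalIntegral.intervalIntegrable_pow e).const_mul γ)
    ((intervalIntegral.intervalIntegrable_pow (e + 1)).const_mul L),
    intervalIntegral.integral_const_mul, intervalIntegral.integral_const_mul, integral_pow,
    integral_pow, div_pow, div_pow]
  field_simp
  push_cast
  ring

theorem lintegral_ofReal_sub_mul_norm {E : Type*} [NormedAddCommGroup E] [NormedSpace ℝ E]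
    [Nontrivial E] [FiniteDimensional ℝ E] [MeasurableSpace E] [BorelSpace E] (μ : Measure E)
    [μ.IsAddHaarMeasure] {γ L : ℝ} (hγ : 0 < γ) (hL : 0 < L) :
    ∫⁻ x, ENNReal.ofReal (γ - L * ‖x‖) ∂μ =
      ENNReal.ofReal (μ.real (Metric.ball 0 1) * γ ^ (Module.finrank ℝ E + 1) /
        ((Module.finrank ℝ E + 1) * L ^ Module.finrank ℝ E)) := by
  obtain ⟨e, he⟩ : ∃ e, Module.finrank ℝ E = e + 1 :=
    Nat.exists_eq_add_one_of_ne_zero Module.finrank_pos.ne'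
  have hsupp : HasCompactSupport fun x : E => max (γ - L * ‖x‖) 0 := by
    refine HasCompactSupport.intro (isCompact_closedBall 0 (γ / L)) fun x hx => ?_
    rw [Metric.mem_closedBall, dist_zero_right, not_le, div_lt_iff₀' hL] at hx
    exact max_eq_right (by linarith)
  have hint : Integrable (fun x : E => max (γ - L * ‖x‖) 0) μ :=
    Continuous.integrable_of_hasCompactSupport (by fun_prop) hsupp
  have hmax : ∀ x : E, ENNReal.ofReal (γ - L * ‖x‖) = ENNReal.ofReal (max (γ - L * ‖x‖) 0) :=
    fun x => by simp [ENNReal.ofReal_max]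
  rw [lintegral_congr hmax, ← ofReal_integral_eq_lintegral_ofReal hint
    (.of_forall fun x => le_max_right _ _), integral_fun_norm_addHaar μ fun t => max (γ - L * t) 0,
    he, Nat.add_sub_cancel, integral_Ioi_pow_smul_max_sub e hγ hL]
  congr 1
  rw [nsmul_eq_mul, smul_eq_mul]
  field_simp
  push_cast
  ring

theorem MeasureTheory.Measure.smul_restrict_le_withDensity {X : Type*} [MeasurableSpace X]
    {ν : Measure X} {s : Set X} (hs : MeasurableSet s) {c : ℝ≥0∞} {f : X → ℝ≥0∞}
    (hf : ∀ x ∈ s, c ≤ f x) :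
    c • ν.restrict s ≤ (ν.restrict s).withDensity f := by
  rw [← withDensity_const]
  exact withDensity_mono ((ae_restrict_mem hs).mono hf)

theorem le_lintegral_ofReal_sub_mul_dist_withDensity {d : ℕ} (hd : 0 < d)
    {p : EuclideanSpace ℝ (Fin d) → ℝ} {c : ℝ} (hc : 0 ≤ c)
    (hp : ∀ x ∈ {x : EuclideanSpace ℝ (Fin d) | ∀ i, x i ∈ Icc (0 : ℝ) 1}, c ≤ p x)
    {x₀ : EuclideanSpace ℝ (Fin d)} (hx₀ : ∀ i, x₀ i ∈ Icc (0 : ℝ) 1) {γ L : ℝ} (hγ : 0 < γ)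
    (hL : 0 < L) (hγL : γ ≤ L) :
    ENNReal.ofReal (c * γ ^ (d + 1) * volume.real (Metric.ball (0 : EuclideanSpace ℝ (Fin d)) 1) /
        ((d + 1) * (2 * L) ^ d)) ≤
      ∫⁻ z, ENNReal.ofReal (γ - L * dist z x₀)
        ∂(volume.restrict {x | ∀ i, x i ∈ Icc (0 : ℝ) 1}).withDensity
          fun x => ENNReal.ofReal (p x) := by
  have : Nonempty (Fin d) := Fin.pos_iff_nonempty.1 hd
  set C := {x : EuclideanSpace ℝ (Fin d) | ∀ i, x i ∈ Icc (0 : ℝ) 1}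
  set φ := fun t => ENNReal.ofReal (γ - L * t)
  have hφ : Antitone φ := fun s t hst =>
    ENNReal.ofReal_le_ofReal (sub_le_sub_left (mul_le_mul_of_nonneg_left hst hL.le) γ)
  have hφ_one : ∀ t, 1 < t → φ t = 0 := fun t ht => ENNReal.ofReal_of_nonpos (by nlinarith)
  have hdens : ENNReal.ofReal c • volume.restrict C ≤
      (volume.restrict C).withDensity fun x => ENNReal.ofReal (p x) :=
    Measure.smul_restrict_le_withDensity (EuclideanSpace.measurableSet_setOf_forall_mem
      measurableSet_Icc) fun x hx => ENNReal.ofReal_le_ofReal (hp x hx)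
  have hgeom : ENNReal.ofReal c * ∫⁻ u : EuclideanSpace ℝ (Fin d), φ ‖u‖ ≤
      2 ^ d * (ENNReal.ofReal c * ∫⁻ z in C, φ (dist z x₀)) := by
    rw [mul_left_comm]
    exact mul_le_mul_right (lintegral_comp_norm_le_two_pow_mul_setLIntegral_cube hφ hφ_one hx₀) _
  calc _ = ENNReal.ofReal (c * (volume.real (Metric.ball (0 : EuclideanSpace ℝ (Fin d)) 1) *
        γ ^ (d + 1) / ((d + 1) * L ^ d)) / 2 ^ d) := by
        congr 1
        field_simp
        ring
    _ = ENNReal.ofReal c * (∫⁻ u : EuclideanSpace ℝ (Fin d), φ ‖u‖) / 2 ^ d := by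
        rw [ENNReal.ofReal_div_of_pos (by positivity), ENNReal.ofReal_mul hc,
          ENNReal.ofReal_pow zero_le_two, ENNReal.ofReal_ofNat,
          lintegral_ofReal_sub_mul_norm volume hγ hL, finrank_euclideanSpace_fin]
    _ ≤ ENNReal.ofReal c * ∫⁻ z in C, φ (dist z x₀) := ENNReal.div_le_of_le_mul' hgeom
    _ = ∫⁻ z, φ (dist z x₀) ∂(ENNReal.ofReal c • volume.restrict C) := by
        rw [lintegral_smul_measure, smul_eq_mul]
    _ ≤ _ := lintegral_mono' hdens le_rfl

/-- On `[0,1]^d`, with an RKHS whose unit ball is `L`-Lipschitz and a probability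
    measure with density bounded below by `c`: if `⟪h, k(x,·) − m⟫ ≥ γ` at some
    point, then in the opposite direction there is a point `y` with
    `⟪−h, k(y,·) − m⟫ ≥ c·γ^{d+1}·β_d / ((d+1)·(2L)^d)`. -/
theorem opposite_mass_bound {H : Type*}
    [NormedAddCommGroup H] [InnerProductSpace ℝ H] [CompleteSpace H]
    (d : ℕ) (hd : 0 < d)
    (cube : Set (EuclideanSpace ℝ (Fin d)))
    (hcube : cube = {x | ∀ i, x i ∈ Set.Icc (0 : ℝ) 1})
    (Φ : EuclideanSpace ℝ (Fin d) → H)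
    (L : ℝ) (hL : 0 < L)
    (hLip : ∀ (g : H), ∀ x ∈ cube, ∀ x' ∈ cube,
      |⟪Φ x, g⟫ - ⟪Φ x', g⟫| ≤ L * ‖g‖ * ‖x - x'‖)
    (μ : Measure (EuclideanSpace ℝ (Fin d))) [IsProbabilityMeasure μ]
    (p : EuclideanSpace ℝ (Fin d) → ℝ) (c : ℝ) (hc : 0 < c)
    (hμ : μ = (volume.restrict cube).withDensity (fun x => ENNReal.ofReal (p x)))
    (hp : ∀ x ∈ cube, c ≤ p x)
    (hΦint : Integrable Φ μ)
    (m : H) (hm : m = ∫ x, Φ x ∂μ)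
    (β : ℝ) (hβ : β = (volume (Metric.ball (0 : EuclideanSpace ℝ (Fin d)) 1)).toReal)
    (h : H) (hh : ‖h‖ ≤ 1)
    (γ : ℝ) (hγ : 0 < γ) (hγL : γ / L ≤ 1)
    (hx : ∃ x ∈ cube, γ ≤ ⟪h, Φ x - m⟫) :
    ∃ y ∈ cube,
      c * γ ^ (d + 1) * β / ((d + 1) * (2 * L) ^ d) ≤ ⟪-h, Φ y - m⟫ := by
  subst hcube hm hβ
  lift L to ℝ≥0 using hL.le
  obtain ⟨x₀, hx₀, hγx₀⟩ := hx
  have hf_lip : LipschitzOnWith L (fun y => ⟪h, Φ y - ∫ x, Φ x ∂μ⟫) _ :=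
    (lipschitzOnWith_inner_sub (fun g x hx x' hx' => by rw [dist_eq_norm]; exact hLip g x hx x' hx')
      h _).weaken (mul_le_of_le_one_right L.2 hh)
  have hμ_cube : ∀ᵐ y ∂μ, y ∈ {x : EuclideanSpace ℝ (Fin d) | ∀ i, x i ∈ Icc (0 : ℝ) 1} :=
    hμ ▸ (withDensity_absolutelyContinuous _ _).ae_le
      (ae_restrict_mem (EuclideanSpace.measurableSet_setOf_forall_mem measurableSet_Icc))
  obtain ⟨y, hy, hy_le⟩ := hf_lip.exists_lintegral_ofReal_sub_mul_dist_le
    (EuclideanSpace.isCompact_setOf_forall_mem isCompact_Icc) hμ_cube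
    ((hΦint.sub (integrable_const _)).const_inner h) (integral_inner_sub_integral hΦint h)
    hx₀ hγx₀
  refine ⟨y, hy, ?_⟩
  have hmass := (hμ ▸ le_lintegral_ofReal_sub_mul_dist_withDensity hd hc.le hp hx₀ hγ hL
    ((div_le_one hL).1 hγL)).trans hy_le
  have hball : 0 < volume.real (Metric.ball (0 : EuclideanSpace ℝ (Fin d)) 1) :=
    ENNReal.toReal_pos (Metric.measure_ball_pos _ _ one_pos).ne' measure_ball_lt_top.ne
  rw [inner_neg_left, ← measureReal_def]
  exact (ENNReal.ofReal_le_ofReal_iff'.1 hmass).resolve_right (not_le.2 (by positivity))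
end
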